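/- arXiv:2509.05158 — 3 statements merged into one kernel-verified Lean document; each statement's English description precedes it below -/
import Mathlib

section
/- For all positive integers s, p and every integer n ≥ s·p + 2, the counts |B^(s)_{p,n}| satisfy |B^(s)_{p,n}| = Σ_{i=0}^{s} C(s,i)·|B^(s)_{p, n−1−i·p}|. -/
/-!
A set `F` of size `j + 1` lies in `ColoredSchreier s p n` exactly when it is `(n, 1)` together
with a `j`-subset of the `s * (n - p * (j + 1))` colored points with values in `[p * (j + 1), n)`,
so its cardinality is `∑ j, C(s * (n - p * (j + 1)), j)`. For `n = m + 1` with `p ≤ m` each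
term is `C(s + s * (m - p * (j + 1)), j)` (the term with `p * (j + 1) = m + 1` is `C(0, j) = 0`).
Expanding it by Vandermonde's identity and regrouping the double sum by the number `i` of points
taken from the summand `s` gives `∑ i, C(s, i) * coloredSchreierCount s p (m - i * p)`.
-/

/-- The collection of subsets `F` of the colored set consisting of the `s` colored copies
`(j, c)` (value `j`, color `c ∈ {1, …, s}`) of each `j ∈ {1, …, n-1}` together with `(n, 1)`,
such that `(n,1) ∈ F` and the minimal numerical value of `F` is at least `p * |F|`. -/
def ColoredSchreier (s p n : ℕ) : Finset (Finset (ℕ × ℕ)) :=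
  (((Finset.Ico 1 n) ×ˢ (Finset.Icc 1 s)) ∪ {(n, 1)}).powerset.filter
    fun F => (n, 1) ∈ F ∧ ∀ x ∈ F, p * F.card ≤ x.1

open Finset

lemma mem_image_insert_powersetCard_iff {α : Type*} [DecidableEq α] {X F : Finset α} {a : α}
    {j : ℕ} (ha : a ∉ X) :
    F ∈ (X.powersetCard j).image (insert a) ↔ a ∈ F ∧ F ⊆ insert a X ∧ #F = j + 1 := by
  constructor
  · intro hF
    obtain ⟨G, hG, rfl⟩ := mem_image.1 hF
    rw [mem_powersetCard] at hG
    exact ⟨mem_insert_self a G, insert_subset_insert a hG.1,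
      by rw [card_insert_of_notMem (fun h => ha (hG.1 h)), hG.2]⟩
  · rintro ⟨haF, hFX, hcard⟩
    refine mem_image.2 ⟨F.erase a, mem_powersetCard.2 ⟨?_, ?_⟩, insert_erase haF⟩
    · simpa [subset_insert_iff] using hFX
    · rw [card_erase_of_mem haF, hcard, Nat.add_sub_cancel]

lemma card_image_insert_powersetCard {α : Type*} [DecidableEq α] {X : Finset α} {a : α}
    (ha : a ∉ X) (j : ℕ) : #((X.powersetCard j).image (insert a)) = (#X).choose j := by
  rw [card_image_of_injOn, card_powersetCard]
  intro G hG G' hG' h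
  have haG : a ∉ G := fun h => ha ((mem_powersetCard.1 hG).1 h)
  have haG' : a ∉ G' := fun h => ha ((mem_powersetCard.1 hG').1 h)
  rw [← erase_insert haG, ← erase_insert haG']
  exact congrArg (·.erase a) h

def coloredSchreierCount (s p m : ℕ) : ℕ :=
  ∑ j ∈ range (m / p), (s * (m - p * (j + 1))).choose j

section ColoredSchreier

variable {s p n : ℕ}

lemma top_notMem_Ico_product (a : ℕ) : (n, 1) ∉ Ico a n ×ˢ Icc 1 s := by
  simp

lemma mem_coloredSchreier_iff (hp : 0 < p) {F : Finset (ℕ × ℕ)} :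
    F ∈ ColoredSchreier s p n ↔
      (n, 1) ∈ F ∧ F ⊆ insert (n, 1) (Ico (p * #F) n ×ˢ Icc 1 s) ∧ p * #F ≤ n := by
  have hF : (n, 1) ∈ F → 1 ≤ p * #F := fun h => Nat.mul_pos hp (card_pos.2 ⟨_, h⟩)
  simp only [ColoredSchreier, mem_filter, mem_powerset, subset_iff, mem_insert, mem_union,
    mem_product, mem_Ico, mem_Icc, mem_singleton]
  constructor
  · rintro ⟨hsub, htop, hmin⟩
    refine ⟨htop, fun x hx => ?_, hmin _ htop⟩
    rcases hsub hx with h | h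
    · exact .inr ⟨⟨hmin x hx, h.1.2⟩, h.2⟩
    · exact .inl h
  · rintro ⟨htop, hsub, hpn⟩
    refine ⟨fun x hx => ?_, htop, fun x hx => ?_⟩ <;> rcases hsub hx with rfl | h
    · exact .inr rfl
    · exact .inl ⟨⟨(hF htop).trans h.1.1, h.1.2⟩, h.2⟩
    · exact hpn
    · exact h.1.1

lemma coloredSchreier_eq_biUnion (hp : 0 < p) :
    ColoredSchreier s p n = (range (n / p)).biUnion fun j =>
      ((Ico (p * (j + 1)) n ×ˢ Icc 1 s).powersetCard j).image (insert (n, 1)) := by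
  ext F
  simp only [mem_biUnion, mem_range,
    mem_image_insert_powersetCard_iff (top_notMem_Ico_product _),
    mem_coloredSchreier_iff hp, Nat.lt_iff_add_one_le, Nat.le_div_iff_mul_le hp, mul_comm _ p]
  constructor
  · rintro ⟨htop, hsub, hpn⟩
    obtain ⟨j, hj⟩ : ∃ j, #F = j + 1 := Nat.exists_eq_add_one.2 (card_pos.2 ⟨_, htop⟩)
    rw [hj] at hsub hpn
    exact ⟨j, hpn, htop, hsub, hj⟩
  · rintro ⟨j, hpn, htop, hsub, hj⟩
    rw [hj]
    exact ⟨htop, hsub, hpn⟩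

lemma card_coloredSchreier (hp : 0 < p) :
    #(ColoredSchreier s p n) = coloredSchreierCount s p n := by
  rw [coloredSchreier_eq_biUnion hp, card_biUnion]
  · refine sum_congr rfl fun j _ => ?_
    rw [card_image_insert_powersetCard (top_notMem_Ico_product _), card_product, Nat.card_Ico,
      Nat.card_Icc, Nat.add_sub_cancel, mul_comm]
  · intro j _ j' _ hjj'
    refine disjoint_left.2 fun F hF hF' => hjj' ?_
    rw [mem_image_insert_powersetCard_iff (top_notMem_Ico_product _)] at hF hF'
    exact Nat.add_right_cancel (hF.2.2.symm.trans hF'.2.2)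

end ColoredSchreier

section Count

variable {s p m : ℕ}

lemma coloredSchreierCount_sub_mul (i : ℕ) :
    coloredSchreierCount s p (m - i * p) =
      ∑ l ∈ range (m / p - i), (s * (m - p * (i + l + 1))).choose l := by
  rw [coloredSchreierCount, mul_comm i p, Nat.sub_mul_div]
  refine sum_congr rfl fun l _ => ?_
  rw [Nat.sub_sub, ← Nat.mul_add, add_assoc]

lemma coloredSchreierCount_succ (hp : 0 < p) (hpm : p ≤ m) :
    coloredSchreierCount s p (m + 1) =
      ∑ j ∈ range (m / p), (s + s * (m - p * (j + 1))).choose j := by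
  have hsucc : ∀ j ∈ range (m / p),
      (s * (m + 1 - p * (j + 1))).choose j = (s + s * (m - p * (j + 1))).choose j := by
    intro j hj
    have hjm : (j + 1) * p ≤ m := (Nat.le_div_iff_mul_le hp).1 (mem_range.1 hj)
    rw [Nat.sub_add_comm (by rwa [mul_comm]), Nat.mul_succ, add_comm]
  have hlast : (s * (m + 1 - p * (m / p + 1))).choose (m / p) = 0 := by
    rw [Nat.sub_eq_zero_of_le (Nat.lt_mul_div_succ m hp), mul_zero]
    exact Nat.choose_eq_zero_of_lt (Nat.div_pos hpm hp)
  rw [coloredSchreierCount, Nat.succ_div]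
  split_ifs
  · rw [sum_range_succ, hlast, add_zero, sum_congr rfl hsucc]
  · rw [add_zero, sum_congr rfl hsucc]

lemma coloredSchreierCount_succ_eq_sum (hp : 0 < p) (hpm : p ≤ m) :
    coloredSchreierCount s p (m + 1) =
      ∑ i ∈ range (s + 1), s.choose i * coloredSchreierCount s p (m - i * p) := by
  have hvanish : ∀ i, m / p ≤ i ∨ s < i →
      s.choose i * coloredSchreierCount s p (m - i * p) = 0 := by
    rintro i (hi | hi)
    · rw [coloredSchreierCount_sub_mul, Nat.sub_eq_zero_of_le hi, sum_range_zero, mul_zero]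
    · rw [Nat.choose_eq_zero_of_lt hi, zero_mul]
  calc coloredSchreierCount s p (m + 1)
      = ∑ j ∈ range (m / p), (s + s * (m - p * (j + 1))).choose j :=
        coloredSchreierCount_succ hp hpm
    _ = ∑ j ∈ range (m / p), ∑ k ∈ range (j + 1),
          s.choose k * (s * (m - p * (k + (j - k) + 1))).choose (j - k) := by
        refine sum_congr rfl fun j _ => ?_
        rw [Nat.add_choose_eq, Nat.sum_antidiagonal_eq_sum_range_succ
          (fun k l => s.choose k * (s * (m - p * (j + 1))).choose l)]
        refine sum_congr rfl fun k hk => ?_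
        rw [Nat.add_sub_cancel' (Nat.lt_succ_iff.1 (mem_range.1 hk))]
    _ = ∑ i ∈ range (m / p), s.choose i * coloredSchreierCount s p (m - i * p) := by
        rw [sum_range_diag_flip (m / p)
          (fun k l => s.choose k * (s * (m - p * (k + l + 1))).choose l)]
        simp only [coloredSchreierCount_sub_mul, mul_sum]
    _ = ∑ i ∈ range (s + 1), s.choose i * coloredSchreierCount s p (m - i * p) := by
        rcases le_total (m / p) (s + 1) with h | h
        · exact sum_subset (range_subset_range.2 h) fun i _ hi =>
            hvanish i (.inl (by simpa using hi))
        · exact (sum_subset (range_subset_range.2 h) fun i _ hi =>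
            hvanish i (.inr (by simpa using hi))).symm

end Count

theorem card_coloredSchreier_recurrence (s p n : ℕ) (hs : 1 ≤ s) (hp : 1 ≤ p)
    (hn : s * p + 2 ≤ n) :
    (ColoredSchreier s p n).card =
      ∑ i ∈ Finset.range (s + 1), s.choose i * (ColoredSchreier s p (n - 1 - i * p)).card := by
  obtain ⟨m, rfl⟩ : ∃ m, n = m + 1 := ⟨n - 1, by omega⟩
  have hpm : p ≤ m := by nlinarith
  simp only [card_coloredSchreier hp, Nat.add_sub_cancel]
  exact coloredSchreierCount_succ_eq_sum hp hpm
end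

section
/- For every integer u ≥ 2 and every integer n ≥ 2u, |D_{u,n}| = Σ_{i=1}^{u} (−1)^{i−1} C(u,i) |D_{u,n−i}| + |D_{u,n−2u+1}|. -/
/-- The set of the first `n` positive integers not divisible by `u`. -/
def Gset (u n : ℕ) : Finset ℕ := (Finset.Icc 1 n).image fun k => (u * k - 1) / (u - 1)

/-- The Schreier subsets of `Gset u n` containing its largest element `⌊(un-1)/(u-1)⌋`. -/
def Dset (u n : ℕ) : Finset (Finset ℕ) :=
  (Gset u n).powerset.filter fun F => (u * n - 1) / (u - 1) ∈ F ∧ ∀ x ∈ F, F.card ≤ x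

/-!
Let `g k = ⌊(uk - 1)/(u - 1)⌋` be the `k`-th positive non-multiple of `u` and
`ν r = r - ⌊r/u⌋` the number of non-multiples in `(0, r]`. A member of `D_{u,m+1}` of size
`r + 1` is `g (m + 1)` together with an `r`-subset of the `m - ν r` elements of `G_{u,m}`
exceeding `r`, so `|D_{u,m+1}| = ∑_r C(m - ν r, r)`. The recurrence says that the `u`-th forward
difference of `m ↦ |D_{u,m}|` at `y` is `|D_{u,y+1-u}|`: the difference lowers each `C(x, r)`
to `C(x, r - u)`, and `ν (r + u) = ν r + u - 1` turns the shifted sum back into the formula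
for `|D_{u,y+1-u}|`.
-/

open Finset fwdDiff

namespace Nat

theorem Ioc_zero_filter_not_dvd_card (u b : ℕ) : #{x ∈ Ioc 0 b | ¬u ∣ x} = b - b / u := by
  have := card_filter_add_card_filter_not (s := Ioc 0 b) (u ∣ ·)
  rw [Nat.Ioc_filter_dvd_card_eq_div, Nat.card_Ioc] at this
  omega

theorem Ioc_filter_not_dvd_card (u a b : ℕ) :
    #{x ∈ Ioc a b | ¬u ∣ x} = (b - b / u) - (a - a / u) := by
  rcases le_total a b with hab | hba
  · rw [← Ioc_zero_filter_not_dvd_card, ← Ioc_zero_filter_not_dvd_card,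
      ← Ioc_union_Ioc_eq_Ioc (zero_le a) hab, filter_union,
      card_union_of_disjoint (disjoint_filter_filter (Ioc_disjoint_Ioc_of_le le_rfl))]
    omega
  · have hmono : #{x ∈ Ioc 0 b | ¬u ∣ x} ≤ #{x ∈ Ioc 0 a | ¬u ∣ x} :=
      card_le_card (filter_subset_filter _ (Ioc_subset_Ioc_right hba))
    rw [Ioc_zero_filter_not_dvd_card, Ioc_zero_filter_not_dvd_card] at hmono
    rw [Ioc_eq_empty_of_le hba, filter_empty, card_empty]
    omega

end Nat

def nthNonMultiple (u k : ℕ) : ℕ := (u * k - 1) / (u - 1)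

section nthNonMultiple

variable {u : ℕ}

theorem nthNonMultiple_eq (hu : 2 ≤ u) {k : ℕ} (hk : 1 ≤ k) :
    nthNonMultiple u k = k + (k - 1) / (u - 1) := by
  have h : u * k - 1 = (u - 1) * k + (k - 1) := by
    have : (u - 1) * k + k = u * k := by
      rw [← Nat.succ_mul, Nat.succ_eq_add_one, Nat.sub_add_cancel (by omega)]
    omega
  rw [nthNonMultiple, h, Nat.mul_add_div (by omega)]

theorem nthNonMultiple_eq_mul_add (hu : 2 ≤ u) {k : ℕ} (hk : 1 ≤ k) :
    nthNonMultiple u k = u * ((k - 1) / (u - 1)) + ((k - 1) % (u - 1) + 1) := by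
  have hdiv := Nat.div_add_mod (k - 1) (u - 1)
  have hmul : (u - 1) * ((k - 1) / (u - 1)) + (k - 1) / (u - 1) = u * ((k - 1) / (u - 1)) := by
    rw [← Nat.succ_mul, Nat.succ_eq_add_one, Nat.sub_add_cancel (by omega)]
  rw [nthNonMultiple_eq hu hk]
  omega

theorem nthNonMultiple_div (hu : 2 ≤ u) {k : ℕ} (hk : 1 ≤ k) :
    nthNonMultiple u k / u = (k - 1) / (u - 1) := by
  have := Nat.mod_lt (k - 1) (show 0 < u - 1 by omega)
  rw [nthNonMultiple_eq_mul_add hu hk, Nat.mul_add_div (by omega),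
    Nat.div_eq_of_lt (a := _ + 1) (by omega), add_zero]

theorem not_dvd_nthNonMultiple (hu : 2 ≤ u) {k : ℕ} (hk : 1 ≤ k) :
    ¬u ∣ nthNonMultiple u k := by
  have := Nat.mod_lt (k - 1) (show 0 < u - 1 by omega)
  rw [Nat.dvd_iff_mod_eq_zero, nthNonMultiple_eq_mul_add hu hk, Nat.mul_add_mod,
    Nat.mod_eq_of_lt (by omega)]
  omega

theorem nthNonMultiple_sub_div (hu : 2 ≤ u) (k : ℕ) :
    nthNonMultiple u k - nthNonMultiple u k / u = k := by
  rcases Nat.eq_zero_or_pos k with rfl | hk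
  · simp [nthNonMultiple]
  rw [nthNonMultiple_div hu hk, nthNonMultiple_eq hu hk]
  omega

theorem strictMono_nthNonMultiple (hu : 2 ≤ u) : StrictMono (nthNonMultiple u) := by
  refine strictMono_nat_of_lt_succ fun k => ?_
  rcases Nat.eq_zero_or_pos k with rfl | hk
  · simp [nthNonMultiple, Nat.div_self (show 0 < u - 1 by omega)]
  rw [nthNonMultiple_eq hu hk, nthNonMultiple_eq hu (by omega)]
  have : (k - 1) / (u - 1) ≤ (k + 1 - 1) / (u - 1) := Nat.div_le_div_right (by omega)
  omega

end nthNonMultiple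

section Gset

variable {u : ℕ}

theorem Gset_eq_image (u m : ℕ) : Gset u m = (Icc 1 m).image (nthNonMultiple u) := rfl

theorem card_Gset (hu : 2 ≤ u) (m : ℕ) : #(Gset u m) = m := by
  rw [Gset_eq_image, card_image_of_injective _ (strictMono_nthNonMultiple hu).injective,
    Nat.card_Icc, Nat.add_sub_cancel]

theorem Gset_eq_filter (hu : 2 ≤ u) (m : ℕ) :
    Gset u m = {x ∈ Ioc 0 (nthNonMultiple u m) | ¬u ∣ x} := by
  refine eq_of_subset_of_card_le (fun x hx => ?_) ?_
  · rw [Gset_eq_image] at hx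
    obtain ⟨k, hk, rfl⟩ := mem_image.mp hx
    rw [mem_Icc] at hk
    have hk_le : k ≤ nthNonMultiple u k := (strictMono_nthNonMultiple hu).id_le k
    simp only [mem_filter, mem_Ioc]
    exact ⟨⟨by omega, (strictMono_nthNonMultiple hu).monotone hk.2⟩,
      not_dvd_nthNonMultiple hu hk.1⟩
  · rw [Nat.Ioc_zero_filter_not_dvd_card, nthNonMultiple_sub_div hu, card_Gset hu]

theorem Gset_succ (u m : ℕ) : Gset u (m + 1) = insert (nthNonMultiple u (m + 1)) (Gset u m) := by
  rw [Gset_eq_image, Gset_eq_image, ← insert_Icc_right_eq_Icc_add_one (by omega),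
    image_insert]

theorem nthNonMultiple_succ_notMem_Gset (hu : 2 ≤ u) (m : ℕ) :
    nthNonMultiple u (m + 1) ∉ Gset u m := by
  rw [Gset_eq_filter hu, mem_filter, mem_Ioc]
  have := strictMono_nthNonMultiple hu (show m < m + 1 by omega)
  omega

theorem card_filter_lt_Gset (hu : 2 ≤ u) (m r : ℕ) :
    #{x ∈ Gset u m | r < x} = m - (r - r / u) := by
  have hfilter : {x ∈ Gset u m | r < x} = {x ∈ Ioc r (nthNonMultiple u m) | ¬u ∣ x} := by
    ext x
    simp only [Gset_eq_filter hu, mem_filter, mem_Ioc]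
    omega
  rw [hfilter, Nat.Ioc_filter_not_dvd_card, nthNonMultiple_sub_div hu]

end Gset

section Dset

variable {u : ℕ}

theorem mem_Dset {m : ℕ} {F : Finset ℕ} :
    F ∈ Dset u m ↔ F ⊆ Gset u m ∧ nthNonMultiple u m ∈ F ∧ ∀ x ∈ F, #F ≤ x := by
  simp [Dset, nthNonMultiple]

theorem card_filter_card_Dset_succ (hu : 2 ≤ u) (m r : ℕ) :
    #{F ∈ Dset u (m + 1) | #F = r + 1} = (m - (r - r / u)).choose r := by
  set a := nthNonMultiple u (m + 1)
  have ha : a ∉ Gset u m := nthNonMultiple_succ_notMem_Gset hu m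
  rw [← card_filter_lt_Gset hu, ← card_powersetCard]
  refine card_nbij' (·.erase a) (insert a) (fun F hF => ?_) (fun F hF => ?_)
    (fun F hF => insert_erase (mem_Dset.mp (mem_filter.mp hF).1).2.1)
    (fun F hF =>
      erase_insert fun haF => ha (mem_filter.mp ((mem_powersetCard.mp hF).1 haF)).1)
  · obtain ⟨⟨hFG, haF, hF_le⟩, hcard⟩ := (mem_filter.mp hF).imp_left mem_Dset.mp
    refine mem_powersetCard.mpr ⟨fun x hx => mem_filter.mpr ⟨?_, ?_⟩, ?_⟩
    · have := hFG (mem_of_mem_erase hx)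
      rw [Gset_succ, mem_insert] at this
      exact this.resolve_left (ne_of_mem_erase hx)
    · have := hF_le x (mem_of_mem_erase hx)
      omega
    · rw [card_erase_of_mem haF, hcard, Nat.add_sub_cancel]
  · obtain ⟨hFT, hcard⟩ := mem_powersetCard.mp hF
    have haF : a ∉ F := fun haF => ha (mem_filter.mp (hFT haF)).1
    have hcard_ins : #(insert a F) = r + 1 := by rw [card_insert_of_notMem haF, hcard]
    have hr : r ≤ m := hcard ▸ card_Gset hu m ▸ card_le_card (hFT.trans (filter_subset _ _))
    have hma : m + 1 ≤ a := (strictMono_nthNonMultiple hu).id_le (m + 1)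
    refine mem_filter.mpr ⟨mem_Dset.mpr ⟨?_, mem_insert_self a F, ?_⟩, hcard_ins⟩
    · rw [Gset_succ]
      exact insert_subset_insert a (hFT.trans (filter_subset _ _))
    · intro x hx
      rw [hcard_ins]
      rcases mem_insert.mp hx with rfl | hx
      · omega
      · exact (mem_filter.mp (hFT hx)).2

theorem card_Dset_succ (hu : 2 ≤ u) {m N : ℕ} (hmN : m < N) :
    #(Dset u (m + 1)) = ∑ r ∈ range N, (m - (r - r / u)).choose r := by
  rw [card_eq_sum_card_fiberwise (f := card) (t := range (N + 1)), sum_range_succ']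
  · have hempty : {F ∈ Dset u (m + 1) | #F = 0} = ∅ :=
      filter_eq_empty_iff.mpr fun F hF => (card_pos.mpr ⟨_, (mem_Dset.mp hF).2.1⟩).ne'
    simp only [card_filter_card_Dset_succ hu, hempty, card_empty, add_zero]
  · intro F hF
    have := card_le_card (mem_Dset.mp hF).1
    rw [card_Gset hu] at this
    simp only [coe_range, Set.mem_Iio]
    omega

end Dset

section fwdDiff

variable {G : Type*} [AddCommGroup G]

theorem fwdDiff_iter_congr {M : Type*} [AddCommMonoid M] (h : M) {f g : M → G} {n : ℕ} {y : M}
    (hfg : ∀ k ≤ n, f (y + k • h) = g (y + k • h)) : Δ_[h] ^[n] f y = Δ_[h] ^[n] g y := by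
  simp only [fwdDiff_iter_eq_sum_shift]
  exact sum_congr rfl fun k hk => by rw [hfg k (Nat.lt_succ_iff.mp (mem_range.mp hk))]

theorem fwdDiff_iter_comp_tsub (f : ℕ → G) (n : ℕ) {s y : ℕ} (hsy : s ≤ y) :
    Δ_[1] ^[n] (fun m => f (m - s)) y = Δ_[1] ^[n] f (y - s) := by
  obtain ⟨y, rfl⟩ := Nat.exists_eq_add_of_le' hsy
  rw [Nat.add_sub_cancel, ← fwdDiff_iter_comp_add]
  simp only [Nat.add_sub_cancel]

theorem sum_range_choose_mul_eq_fwdDiff_iter (f : ℕ → ℤ) (n y : ℕ) :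
    ∑ i ∈ range (n + 1), (-1) ^ i * (n.choose i : ℤ) * f (y + n - i) = Δ_[1] ^[n] f y := by
  rw [fwdDiff_iter_eq_sum_shift, ← sum_range_reflect]
  refine sum_congr rfl fun i hi => ?_
  have hin : i ≤ n := Nat.lt_succ_iff.mp (mem_range.mp hi)
  rw [show n + 1 - 1 - i = n - i by omega, Nat.choose_symm hin,
    show y + n - (n - i) = y + i by omega, smul_eq_mul, smul_eq_mul, mul_one]

theorem fwdDiff_iter_choose_eq_ite (n r x : ℕ) :
    Δ_[1] ^[n] (fun x => (x.choose r : ℤ)) x =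
      if n ≤ r then (x.choose (r - n) : ℤ) else 0 := by
  split_ifs with hnr
  · obtain ⟨j, rfl⟩ := Nat.exists_eq_add_of_le hnr
    rw [fwdDiff_iter_choose, Nat.add_sub_cancel_left]
  · obtain ⟨j, rfl⟩ := Nat.exists_eq_add_of_lt (not_le.mp hnr)
    have hconst : Δ_[1] ^[r] (fun x => (x.choose r : ℤ)) = fun _ => 1 := by
      simpa using fwdDiff_iter_choose 0 r
    rw [show r + j + 1 = j + 1 + r by ring, Function.iterate_add_apply, hconst,
      Function.iterate_succ_apply, fwdDiff_const]
    simp [fwdDiff_iter_eq_sum_shift]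

end fwdDiff

section recurrence

variable {u : ℕ}

theorem fwdDiff_iter_choose_tsub (hu : 2 ≤ u) {y : ℕ} (hy : u ≤ y + 1) (r : ℕ) :
    Δ_[1] ^[u] (fun m => ((m - (r - r / u)).choose r : ℤ)) y =
      if u ≤ r then ((y - (r - r / u)).choose (r - u) : ℤ) else 0 := by
  by_cases hs : r - r / u ≤ y
  · rw [fwdDiff_iter_comp_tsub (fun x => (x.choose r : ℤ)) u hs, fwdDiff_iter_choose_eq_ite]
  have hur : u < r := by
    by_contra! hru
    rcases hru.lt_or_eq with hru | rfl
    · rw [Nat.div_eq_of_lt hru] at hs; omega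
    · rw [Nat.div_self (by omega)] at hs; omega
  -- the window `[y, y + u]` lies below `r - r / u + r`, where all the binomials vanish
  have hzero : Δ_[1] ^[u] (fun m => ((m - (r - r / u)).choose r : ℤ)) y = Δ_[1] ^[u] 0 y :=
    fwdDiff_iter_congr 1 fun k hk => by
      rw [Pi.zero_apply, Nat.cast_eq_zero]
      exact Nat.choose_eq_zero_of_lt (by rw [smul_eq_mul, mul_one]; omega)
  rw [hzero, if_pos hur.le, Nat.sub_eq_zero_of_le (not_le.mp hs).le,
    Nat.choose_eq_zero_of_lt (by omega), Nat.cast_zero]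
  simp [fwdDiff_iter_eq_sum_shift]

theorem fwdDiff_iter_card_Dset (hu : 2 ≤ u) {y : ℕ} (hy : u ≤ y) :
    Δ_[1] ^[u] (fun m => (#(Dset u m) : ℤ)) y = #(Dset u (y + 1 - u)) := by
  obtain ⟨y, rfl⟩ := Nat.exists_eq_add_of_le' (show 1 ≤ y by omega)
  have hwindow := fwdDiff_iter_congr 1 (n := u) (y := y)
    (f := fun m => (#(Dset u (m + 1)) : ℤ))
    (g := ∑ r ∈ range (u + (y + 1)), fun m => ((m - (r - r / u)).choose r : ℤ))
    fun k hk => by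
      rw [Finset.sum_apply, card_Dset_succ hu (N := u + (y + 1)) (by rw [smul_eq_mul]; omega)]
      push_cast
      rfl
  rw [← fwdDiff_iter_comp_add, hwindow, fwdDiff_iter_finsetSum, Finset.sum_apply,
    show y + 1 + 1 - u = y + 1 - u + 1 by omega, card_Dset_succ hu (N := y + 1) (by omega),
    sum_range_add, sum_eq_zero fun r hr => ?_, zero_add]
  · push_cast
    refine sum_congr rfl fun j _ => ?_
    rw [fwdDiff_iter_choose_tsub hu (by omega), if_pos (Nat.le_add_right u j),
      add_comm u j, Nat.add_div_right j (by omega), Nat.add_sub_cancel]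
    congr 2
    have := Nat.div_le_self j u
    omega
  · rw [fwdDiff_iter_choose_tsub hu (by omega), if_neg (not_le.mpr (mem_range.mp hr))]

end recurrence

theorem card_Dset_recurrence (u n : ℕ) (hu : 2 ≤ u) (hn : 2 * u ≤ n) :
    ((Dset u n).card : ℤ) =
      (∑ i ∈ Finset.Icc 1 u,
        (-1 : ℤ) ^ (i - 1) * (u.choose i : ℤ) * ((Dset u (n - i)).card : ℤ)) +
      ((Dset u (n - (2 * u - 1))).card : ℤ) := by
  have key := fwdDiff_iter_card_Dset hu (y := n - u) (by omega)
  rw [← sum_range_choose_mul_eq_fwdDiff_iter, Nat.sub_add_cancel (by omega : u ≤ n),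
    sum_range_succ', show n - u + 1 - u = n - (2 * u - 1) by omega] at key
  rw [← key, ← Ico_add_one_right_eq_Icc, sum_Ico_eq_sum_range, Nat.add_sub_cancel]
  simp only [pow_succ, add_comm 1, Nat.add_sub_cancel, pow_zero, Nat.choose_zero_right,
    Nat.cast_one, one_mul, Nat.sub_zero, mul_neg_one, neg_mul, sum_neg_distrib]
  ring
end

section
/- For every integer u ≥ 2 and every integer n with 1 ≤ n ≤ 2u − 1, the binomial-sum identity Σ_{k=1}^{⌊((n+1)u−1)/(2u−1)⌋} C(n − k + ⌊(k−1)/u⌋, k−1) = Σ_{i=0}^{⌊(n−1)/2⌋} C(n − i − 1, i) holds. -/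
open Finset

/- For `k ≤ M := ⌊((n+1)u-1)/(2u-1)⌋ ≤ u` the correction `⌊(k-1)/u⌋` vanishes, so the left side is
`∑_{j<M} C(n-j-1, j)`. Since `M > ⌊(n-1)/2⌋` and `C(n-j-1, j) = 0` once `2j ≥ n`, the extra terms
contribute nothing. -/

lemma div_two_mul_sub_one_le {u n : ℕ} (hn : n ≤ 2 * u - 1) :
    ((n + 1) * u - 1) / (2 * u - 1) ≤ u := by
  rcases Nat.eq_zero_or_pos u with rfl | hu
  · simp
  rw [← Nat.lt_succ_iff, Nat.div_lt_iff_lt_mul (by omega)]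
  have h1 : 1 ≤ (n + 1) * u := Nat.mul_pos (by omega) hu
  zify [h1, show 1 ≤ 2 * u by omega] at *
  nlinarith [mul_le_mul_of_nonneg_right hn (show (0 : ℤ) ≤ u by positivity)]

lemma sub_one_div_two_lt_div {u n : ℕ} (hu : 1 ≤ u) (hn : 1 ≤ n) :
    (n - 1) / 2 < ((n + 1) * u - 1) / (2 * u - 1) := by
  rw [Nat.lt_iff_add_one_le, Nat.le_div_iff_mul_le (by omega)]
  have h1 : 1 ≤ (n + 1) * u := Nat.mul_pos (by omega) hu
  have hq : 2 * ((n - 1) / 2) ≤ n - 1 := Nat.mul_div_le _ _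
  zify [h1, hn, show 1 ≤ 2 * u by omega] at *
  nlinarith [mul_le_mul_of_nonneg_right hq (show (0 : ℤ) ≤ u by positivity)]

lemma sum_Icc_choose_add_div_eq_sum_range {u n M : ℕ} (hM : M ≤ u) :
    ∑ k ∈ Icc 1 M, (n - k + (k - 1) / u).choose (k - 1) =
      ∑ j ∈ range M, (n - j - 1).choose j := by
  rw [← Ico_add_one_right_eq_Icc, sum_Ico_eq_sum_range]
  refine sum_congr rfl fun j hj => ?_
  have hj : j < u := by rw [mem_range] at hj; omega
  rw [add_tsub_cancel_left, Nat.div_eq_of_lt hj]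
  congr 1
  omega

lemma sum_range_choose_eq_of_lt {n m : ℕ} (hm : (n - 1) / 2 < m) :
    ∑ j ∈ range m, (n - j - 1).choose j =
      ∑ i ∈ range ((n - 1) / 2 + 1), (n - i - 1).choose i := by
  refine (sum_subset (range_subset_range.2 hm) fun j _ hj => ?_).symm
  rw [mem_range, not_lt] at hj
  exact Nat.choose_eq_zero_of_lt (by omega)

theorem binomial_sum_identity_general (u n : ℕ) (hn1 : 1 ≤ n) (hn2 : n ≤ 2 * u - 1) :
    ∑ k ∈ Finset.Icc 1 (((n + 1) * u - 1) / (2 * u - 1)),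
        (n - k + (k - 1) / u).choose (k - 1) =
      ∑ i ∈ Finset.range ((n - 1) / 2 + 1), (n - i - 1).choose i := by
  rw [sum_Icc_choose_add_div_eq_sum_range (div_two_mul_sub_one_le hn2)]
  exact sum_range_choose_eq_of_lt (sub_one_div_two_lt_div (by omega) hn1)

theorem binomial_sum_identity (u n : ℕ) (hu : 2 ≤ u) (hn1 : 1 ≤ n) (hn2 : n ≤ 2 * u - 1) :
    ∑ k ∈ Finset.Icc 1 (((n + 1) * u - 1) / (2 * u - 1)),
        (n - k + (k - 1) / u).choose (k - 1) =
      ∑ i ∈ Finset.range ((n - 1) / 2 + 1), (n - i - 1).choose i :=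
  binomial_sum_identity_general u n hn1 hn2
end
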